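/- Let H be a real Hilbert space, C ⊆ H a nonempty closed convex set, π_C the metric projection, and j : H → ℝ convex and Fréchet differentiable near C with a minimizer ū over C. Let {u_n} ⊂ C satisfy u_{n+1} = π_C(u_n − τ_n g_n) with deterministic τ_n > 0 and unbiased stochastic gradients: E[g_n | F_n] = ∇j(u_n), u_n F_n-measurable, E[‖g_n‖² | F_n] ≤ M₁ + M₂‖u_n‖² almost surely. Set e_n := E[‖u_n − ū‖²], and for 1 ≤ i ≤ N define γ_n := τ_n / (Σ_{l=i}^N τ_l) and the averaged iterate ũ_i^N := Σ_{n=i}^N γ_n u_n. Then E[j(ũ_i^N) − j(ū)] ≤ (e_i + Σ_{n=i}^N τ_n² (2M₂ e_n + M₁ + 2M₂‖ū‖²)) / (2 Σ_{n=i}^N τ_n). -/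

import Mathlib

/-!
Projecting onto `C` does not increase the distance to points of `C`, so one step gives
`e (n+1) ≤ e n - 2 τ_n E⟪g_n, u_n - ū⟫ + τ_n² E‖g_n‖²`. Conditioning on `ℱ n` replaces `g_n` by
`∇j(u_n)` in the inner product, and the gradient inequality of the convex `j` bounds
`E j(u_n) - j ū` by it; the growth condition bounds `E‖g_n‖²` by `M₁ + 2 M₂ e_n + 2 M₂ ‖ū‖²`.
Summing the weighted steps telescopes the `e_n`, and Jensen's inequality passes from the weighted
average of the gaps `E j(u_n) - j ū` to the averaged iterate.
-/

open MeasureTheory Filter Set Finset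
open scoped RealInnerProductSpace

section

variable {H : Type*} [NormedAddCommGroup H] [InnerProductSpace ℝ H]

theorem ConvexOn.add_inner_le_of_hasGradientAt [CompleteSpace H] {s : Set H} {j : H → ℝ}
    {x y G : H} (hj : ConvexOn ℝ s j) (hx : x ∈ s) (hy : y ∈ s) (hG : HasGradientAt j G x) :
    j x + ⟪G, y - x⟫ ≤ j y := by
  have hline : ConvexOn ℝ (AffineMap.lineMap x y ⁻¹' s) (j ∘ AffineMap.lineMap x y) :=
    hj.comp_affineMap _
  have hderiv : HasDerivAt (j ∘ AffineMap.lineMap x y) ⟪G, y - x⟫ (0 : ℝ) := by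
    have hG' := hasGradientAt_iff_hasFDerivAt.mp hG
    rw [← AffineMap.lineMap_apply_zero x y (k := ℝ)] at hG'
    simpa using hG'.comp_hasDerivAt (0 : ℝ) AffineMap.hasDerivAt_lineMap
  have := hline.le_slope_of_hasDerivAt (x := 0) (y := 1) (by simpa) (by simpa) one_pos hderiv
  simp only [slope_def_field, Function.comp_apply, AffineMap.lineMap_apply_one,
    AffineMap.lineMap_apply_zero, sub_zero, div_one] at this
  linarith

theorem Convex.norm_sub_le_of_forall_norm_sub_le {K : Set H} (hK : Convex ℝ K) {x p w : H}
    (hp : p ∈ K) (hnearest : ∀ v ∈ K, ‖x - p‖ ≤ ‖x - v‖) (hw : w ∈ K) :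
    ‖p - w‖ ≤ ‖x - w‖ := by
  have : Nonempty K := ⟨⟨p, hp⟩⟩
  have hinf : ‖x - p‖ = ⨅ v : K, ‖x - v‖ :=
    le_antisymm (le_ciInf fun v => hnearest v v.2)
      (ciInf_le ⟨0, Set.forall_mem_range.mpr fun _ => norm_nonneg _⟩ (⟨p, hp⟩ : K))
  have hobtuse : ⟪x - p, w - p⟫ ≤ 0 := (norm_eq_iInf_iff_real_inner_le_zero hK hp).mp hinf w hw
  have hsplit : x - w = (x - p) - (w - p) := by abel
  rw [← sq_le_sq₀ (norm_nonneg _) (norm_nonneg _), hsplit, norm_sub_sq_real (x - p),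
    ← norm_neg (p - w), neg_sub]
  nlinarith [sq_nonneg ‖x - p‖]

theorem Convex.norm_sub_sq_le_of_projected_step {K : Set H} (hK : Convex ℝ K) {x g p w : H}
    {τ : ℝ} (hp : p ∈ K) (hnearest : ∀ v ∈ K, ‖x - τ • g - p‖ ≤ ‖x - τ • g - v‖) (hw : w ∈ K) :
    ‖p - w‖ ^ 2 ≤ ‖x - w‖ ^ 2 - 2 * τ * ⟪g, x - w⟫ + τ ^ 2 * ‖g‖ ^ 2 := by
  have hshift : x - τ • g - w = (x - w) - τ • g := by abel
  calc ‖p - w‖ ^ 2 ≤ ‖x - τ • g - w‖ ^ 2 := by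
        gcongr; exact hK.norm_sub_le_of_forall_norm_sub_le hp hnearest hw
    _ = _ := by
        rw [hshift, norm_sub_sq_real, real_inner_smul_right, norm_smul, mul_pow,
          Real.norm_eq_abs, sq_abs, real_inner_comm]
        ring

section Expectation

variable {Ω : Type*} {m m0 : MeasurableSpace Ω} {μ : Measure Ω}

theorem MeasureTheory.MemLp.integrable_inner {f h : Ω → H} (hf : MemLp f 2 μ)
    (hh : MemLp h 2 μ) : Integrable (fun ω => ⟪f ω, h ω⟫) μ :=
  (L2.integrable_inner (𝕜 := ℝ) (hf.toLp f) (hh.toLp h)).congr <| by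
    filter_upwards [hf.coeFn_toLp, hh.coeFn_toLp] with ω hfω hhω
    rw [hfω, hhω]

theorem integral_le_of_condExp_le (hm : m ≤ m0) [SigmaFinite (μ.trim hm)] {f h : Ω → ℝ}
    (hh : Integrable h μ) (hle : μ[f|m] ≤ᵐ[μ] h) : ∫ ω, f ω ∂μ ≤ ∫ ω, h ω ∂μ :=
  (integral_condExp hm).symm.trans_le (integral_mono_ae integrable_condExp hh hle)

theorem Convex.integral_norm_sub_sq_le_of_projected_step {K : Set H} (hK : Convex ℝ K)
    {u g v : Ω → H} {τ : ℝ} {w : H} (hw : w ∈ K) (hv : ∀ ω, v ω ∈ K)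
    (hnearest : ∀ ω, ∀ x ∈ K, ‖u ω - τ • g ω - v ω‖ ≤ ‖u ω - τ • g ω - x‖)
    (hu : MemLp (fun ω => u ω - w) 2 μ) (hg : MemLp g 2 μ)
    (hv_int : Integrable (fun ω => ‖v ω - w‖ ^ 2) μ) :
    ∫ ω, ‖v ω - w‖ ^ 2 ∂μ ≤ ∫ ω, ‖u ω - w‖ ^ 2 ∂μ - 2 * τ * ∫ ω, ⟪g ω, u ω - w⟫ ∂μ
      + τ ^ 2 * ∫ ω, ‖g ω‖ ^ 2 ∂μ := by
  have hu_sq := (memLp_two_iff_integrable_sq_norm hu.1).mp hu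
  have hg_sq := (memLp_two_iff_integrable_sq_norm hg.1).mp hg
  have hinner := (hg.integrable_inner hu).const_mul (2 * τ)
  calc ∫ ω, ‖v ω - w‖ ^ 2 ∂μ
      ≤ ∫ ω, ‖u ω - w‖ ^ 2 - 2 * τ * ⟪g ω, u ω - w⟫ + τ ^ 2 * ‖g ω‖ ^ 2 ∂μ :=
        integral_mono hv_int ((hu_sq.sub hinner).add (hg_sq.const_mul _))
          fun ω => hK.norm_sub_sq_le_of_projected_step (hv ω) (hnearest ω) hw
    _ = _ := by
        rw [integral_add _ (hg_sq.const_mul _), integral_sub hu_sq hinner, integral_const_mul,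
          integral_const_mul]
        exact hu_sq.sub hinner

theorem ConvexOn.integral_sub_le_integral_inner_of_condExp_ae_eq [CompleteSpace H]
    [IsProbabilityMeasure μ] (hm : m ≤ m0) {s : Set H} {j : H → ℝ} {j' : H → H}
    (hj : ConvexOn ℝ s j) (hgrad : ∀ x ∈ s, HasGradientAt j (j' x) x) {v g : Ω → H} {w : H}
    (hw : w ∈ s) (hv : ∀ ω, v ω ∈ s) (hvm : StronglyMeasurable[m] v)
    (hvw : MemLp (fun ω => v ω - w) 2 μ) (hg : MemLp g 2 μ)
    (hjv : Integrable (fun ω => j (v ω)) μ) (hunbiased : μ[g|m] =ᵐ[μ] fun ω => j' (v ω)) :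
    ∫ ω, j (v ω) ∂μ - j w ≤ ∫ ω, ⟪g ω, v ω - w⟫ ∂μ := by
  have hpull : μ[fun ω => ⟪g ω, v ω - w⟫|m] =ᵐ[μ] fun ω => ⟪j' (v ω), v ω - w⟫ := by
    have := condExp_bilin_of_aestronglyMeasurable_right (innerSL ℝ)
      (hvm.sub stronglyMeasurable_const).aestronglyMeasurable
      (hg.integrable_inner hvw) (hg.integrable one_le_two)
    filter_upwards [this, hunbiased] with ω hω hgω
    rw [← hgω]
    exact hω
  have hgap : ∀ ω, j (v ω) - j w ≤ ⟪j' (v ω), v ω - w⟫ := fun ω => by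
    have := hj.add_inner_le_of_hasGradientAt (hv ω) hw (hgrad _ (hv ω))
    rw [← neg_sub (v ω), inner_neg_right] at this
    linarith
  calc ∫ ω, j (v ω) ∂μ - j w = ∫ ω, j (v ω) - j w ∂μ := by
        rw [integral_sub hjv (integrable_const _), integral_const, probReal_univ, one_smul]
    _ ≤ ∫ ω, ⟪j' (v ω), v ω - w⟫ ∂μ :=
        integral_mono (hjv.sub (integrable_const _)) (integrable_condExp.congr hpull) hgap
    _ = ∫ ω, ⟪g ω, v ω - w⟫ ∂μ := (integral_congr_ae hpull).symm.trans (integral_condExp hm)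

theorem integral_norm_sq_le_of_condExp_le {E : Type*} [NormedAddCommGroup E]
    [IsProbabilityMeasure μ] (hm : m ≤ m0) {g u : Ω → E} {w : E} {M₁ M₂ : ℝ} (hM₂ : 0 ≤ M₂)
    (hu : Integrable (fun ω => ‖u ω‖ ^ 2) μ) (huw : Integrable (fun ω => ‖u ω - w‖ ^ 2) μ)
    (hgrowth : ∀ᵐ ω ∂μ, μ[fun ω' => ‖g ω'‖ ^ 2|m] ω ≤ M₁ + M₂ * ‖u ω‖ ^ 2) :
    ∫ ω, ‖g ω‖ ^ 2 ∂μ ≤ M₁ + 2 * M₂ * ∫ ω, ‖u ω - w‖ ^ 2 ∂μ + 2 * M₂ * ‖w‖ ^ 2 := by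
  have hsq : ∀ ω, ‖u ω‖ ^ 2 ≤ 2 * ‖u ω - w‖ ^ 2 + 2 * ‖w‖ ^ 2 := fun ω => by
    nlinarith [norm_le_norm_sub_add (u ω) w, norm_nonneg (u ω), sq_nonneg (‖u ω - w‖ - ‖w‖)]
  calc ∫ ω, ‖g ω‖ ^ 2 ∂μ ≤ ∫ ω, M₁ + M₂ * ‖u ω‖ ^ 2 ∂μ :=
        integral_le_of_condExp_le hm ((integrable_const _).add (hu.const_mul _)) hgrowth
    _ ≤ ∫ ω, M₁ + 2 * M₂ * ‖u ω - w‖ ^ 2 + 2 * M₂ * ‖w‖ ^ 2 ∂μ := by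
        refine integral_mono ((integrable_const _).add (hu.const_mul _))
          (((integrable_const _).add (huw.const_mul _)).add (integrable_const _)) fun ω => ?_
        nlinarith [hsq ω]
    _ = M₁ + 2 * M₂ * ∫ ω, ‖u ω - w‖ ^ 2 ∂μ + 2 * M₂ * ‖w‖ ^ 2 := by
        rw [integral_add _ (integrable_const _), integral_add (integrable_const _)
          (huw.const_mul _), integral_const_mul]
        · simp
        · exact (integrable_const _).add (huw.const_mul _)

theorem ConvexOn.integral_map_sum_le {E ι : Type*} [AddCommGroup E] [Module ℝ E] {s : Set E}
    {j : E → ℝ} (hj : ConvexOn ℝ s j) {t : Finset ι} {w : ι → ℝ} {v : ι → Ω → E}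
    (hw₀ : ∀ i ∈ t, 0 ≤ w i) (hw₁ : ∑ i ∈ t, w i = 1) (hv : ∀ i ∈ t, ∀ ω, v i ω ∈ s)
    (hjv : ∀ i ∈ t, Integrable (fun ω => j (v i ω)) μ)
    (hjavg : Integrable (fun ω => j (∑ i ∈ t, w i • v i ω)) μ) :
    ∫ ω, j (∑ i ∈ t, w i • v i ω) ∂μ ≤ ∑ i ∈ t, w i * ∫ ω, j (v i ω) ∂μ := by
  simp_rw [← integral_const_mul]
  rw [← integral_finsetSum _ fun i hi => (hjv i hi).const_mul _]
  exact integral_mono hjavg (integrable_finsetSum _ fun i hi => (hjv i hi).const_mul _)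
    fun ω => hj.map_sum_le hw₀ hw₁ fun i hi => hv i hi ω

end Expectation

end

theorem two_mul_sum_le_of_forall_le_sub_succ {τ a b e : ℕ → ℝ} (he : ∀ n, 0 ≤ e n)
    (hstep : ∀ n, 2 * τ n * a n ≤ e n - e (n + 1) + τ n ^ 2 * b n) (i N : ℕ) :
    2 * ∑ n ∈ Icc i N, τ n * a n ≤ e i + ∑ n ∈ Icc i N, τ n ^ 2 * b n := by
  rcases le_or_gt i N with hiN | hNi
  · have htelescope : ∑ n ∈ Icc i N, (e n - e (n + 1)) = e i - e (N + 1) := by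
      rw [← neg_sub (e (N + 1)), ← Finset.sum_Icc_sub hiN, ← Finset.sum_neg_distrib]
      simp only [neg_sub]
    calc 2 * ∑ n ∈ Icc i N, τ n * a n = ∑ n ∈ Icc i N, 2 * τ n * a n := by
          rw [Finset.mul_sum]; simp only [mul_assoc]
      _ ≤ ∑ n ∈ Icc i N, (e n - e (n + 1) + τ n ^ 2 * b n) := sum_le_sum fun n _ => hstep n
      _ ≤ e i + ∑ n ∈ Icc i N, τ n ^ 2 * b n := by
          rw [Finset.sum_add_distrib, htelescope]; linarith [he (N + 1)]
  · simp [Finset.Icc_eq_empty_of_lt hNi, he i]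

theorem psg_averaged_iterates_estimate_general
    {H : Type*} [NormedAddCommGroup H] [InnerProductSpace ℝ H] [CompleteSpace H]
    {Ω : Type*} {m0 : MeasurableSpace Ω} {μ : Measure Ω} [IsProbabilityMeasure μ]
    (ℱ : Filtration ℕ m0)
    (C : Set H) (hC_convex : Convex ℝ C)
    (proj : H → H)
    (hproj : ∀ x, ∀ w ∈ C, ‖x - proj x‖ ≤ ‖x - w‖)
    (j : H → ℝ) (j' : H → H) (hj_convex : ConvexOn ℝ Set.univ j)
    (hj_diff : ∃ U : Set H, IsOpen U ∧ C ⊆ U ∧ ∀ x ∈ U, HasGradientAt j (j' x) x)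
    (ub : H) (hub_mem : ub ∈ C)
    (τ : ℕ → ℝ) (hτ_pos : ∀ n, 0 < τ n)
    (u g : ℕ → Ω → H)
    (hu_mem : ∀ n ω, u n ω ∈ C)
    (hupdate : ∀ n ω, u (n + 1) ω = proj (u n ω - τ n • g n ω))
    (hu_meas : ∀ n, StronglyMeasurable[ℱ n] (u n))
    (hg_unbiased : ∀ n, μ[g n | ℱ n] =ᵐ[μ] fun ω => j' (u n ω))
    (hg_int : ∀ n, Integrable (g n) μ)
    (hg_sq_int : ∀ n, Integrable (fun ω => ‖g n ω‖ ^ 2) μ)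
    (hu_sq_int : ∀ n u₀, Integrable (fun ω => ‖u n ω - u₀‖ ^ 2) μ)
    (M₁ M₂ : ℝ) (hM₂ : 0 < M₂)
    (hgrowth : ∀ n, ∀ᵐ ω ∂μ,
      (μ[fun ω' => ‖g n ω'‖ ^ 2 | ℱ n]) ω ≤ M₁ + M₂ * ‖u n ω‖ ^ 2)
    (e : ℕ → ℝ) (he : ∀ n, e n = ∫ ω, ‖u n ω - ub‖ ^ 2 ∂μ)
    (hjavg_int : ∀ i N : ℕ, Integrable (fun ω =>
      j (∑ n ∈ Finset.Icc i N, (τ n / ∑ l ∈ Finset.Icc i N, τ l) • u n ω)) μ) :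
    ∀ i N : ℕ, 1 ≤ i → i ≤ N →
      (∫ ω, j (∑ n ∈ Finset.Icc i N, (τ n / ∑ l ∈ Finset.Icc i N, τ l) • u n ω) ∂μ) - j ub ≤
        (e i + ∑ n ∈ Finset.Icc i N, τ n ^ 2 * (2 * M₂ * e n + M₁ + 2 * M₂ * ‖ub‖ ^ 2)) /
          (2 * ∑ n ∈ Finset.Icc i N, τ n) := by
  obtain ⟨U, -, hCU, hgrad⟩ := hj_diff
  have hg_L2 : ∀ n, MemLp (g n) 2 μ := fun n =>
    (memLp_two_iff_integrable_sq_norm (hg_int n).1).mpr (hg_sq_int n)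
  have hu_L2 : ∀ n, MemLp (fun ω => u n ω - ub) 2 μ := fun n =>
    (memLp_two_iff_integrable_sq_norm
      (((hu_meas n).mono (ℱ.le n)).aestronglyMeasurable.sub aestronglyMeasurable_const)).mpr
      (hu_sq_int n ub)
  -- the average over the single index `n` is `u n` itself
  have hj_int : ∀ n, Integrable (fun ω => j (u n ω)) μ := fun n => by
    simpa [div_self (hτ_pos n).ne'] using hjavg_int n n
  have hstep : ∀ n, 2 * τ n * ((∫ ω, j (u n ω) ∂μ) - j ub) ≤
      e n - e (n + 1) + τ n ^ 2 * (2 * M₂ * e n + M₁ + 2 * M₂ * ‖ub‖ ^ 2) := fun n => by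
    have hdescent := hC_convex.integral_norm_sub_sq_le_of_projected_step hub_mem
      (hu_mem (n + 1)) (fun ω => hupdate n ω ▸ hproj _) (hu_L2 n) (hg_L2 n)
      (hu_sq_int (n + 1) ub)
    have hgap := (hj_convex.subset (subset_univ C) hC_convex)
      |>.integral_sub_le_integral_inner_of_condExp_ae_eq (ℱ.le n) (fun x hx => hgrad x (hCU hx))
        hub_mem (hu_mem n) (hu_meas n) (hu_L2 n) (hg_L2 n) (hj_int n) (hg_unbiased n)
    have hmoment := integral_norm_sq_le_of_condExp_le (ℱ.le n) hM₂.le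
      (by simpa using hu_sq_int n 0) (hu_sq_int n ub) (hgrowth n)
    rw [he, he]
    nlinarith [mul_le_mul_of_nonneg_left hgap (hτ_pos n).le,
      mul_le_mul_of_nonneg_left hmoment (sq_nonneg (τ n))]
  have he_nonneg : ∀ n, 0 ≤ e n := fun n => (he n).symm ▸ integral_nonneg fun ω => by positivity
  rintro i N - hiN
  set S := ∑ l ∈ Finset.Icc i N, τ l
  have hS : 0 < S := Finset.sum_pos (fun l _ => hτ_pos l) (Finset.nonempty_Icc.mpr hiN)
  have hγ : ∑ n ∈ Finset.Icc i N, τ n / S = 1 := by rw [← Finset.sum_div, div_self hS.ne']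
  calc (∫ ω, j (∑ n ∈ Finset.Icc i N, (τ n / S) • u n ω) ∂μ) - j ub
      ≤ ∑ n ∈ Finset.Icc i N, τ n / S * (∫ ω, j (u n ω) ∂μ) - j ub := by
        gcongr
        exact hj_convex.integral_map_sum_le (fun n _ => (div_pos (hτ_pos n) hS).le) hγ
          (fun _ _ _ => mem_univ _) (fun n _ => hj_int n) (hjavg_int i N)
    _ = ∑ n ∈ Finset.Icc i N, τ n / S * ((∫ ω, j (u n ω) ∂μ) - j ub) := by
        simp_rw [mul_sub, Finset.sum_sub_distrib, ← Finset.sum_mul, hγ, one_mul]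
    _ = 2 * (∑ n ∈ Finset.Icc i N, τ n * ((∫ ω, j (u n ω) ∂μ) - j ub)) / (2 * S) := by
        simp_rw [mul_div_mul_left _ S two_ne_zero, Finset.sum_div, div_mul_eq_mul_div]
    _ ≤ _ := by
        gcongr
        exact two_mul_sum_le_of_forall_le_sub_succ he_nonneg hstep i N

/-- Averaged-iterate efficiency estimate in the general convex case:
`E[j(ũ_i^N) - j ū] ≤ (e_i + ∑_{n=i}^N τ_n² (2 M₂ e_n + M₁ + 2 M₂ ‖ū‖²)) / (2 ∑_{n=i}^N τ_n)`,
where `ũ_i^N = ∑_{n=i}^N (τ_n / ∑_{l=i}^N τ_l) u_n`. -/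
theorem psg_averaged_iterates_estimate
    {H : Type*} [NormedAddCommGroup H] [InnerProductSpace ℝ H] [CompleteSpace H]
    {Ω : Type*} {m0 : MeasurableSpace Ω} {μ : Measure Ω} [IsProbabilityMeasure μ]
    (ℱ : Filtration ℕ m0)
    (C : Set H) (hC_ne : C.Nonempty) (hC_closed : IsClosed C) (hC_convex : Convex ℝ C)
    (proj : H → H) (hproj_mem : ∀ x, proj x ∈ C)
    (hproj : ∀ x, ∀ w ∈ C, ‖x - proj x‖ ≤ ‖x - w‖)
    (j : H → ℝ) (j' : H → H) (hj_convex : ConvexOn ℝ Set.univ j)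
    (hj_diff : ∃ U : Set H, IsOpen U ∧ C ⊆ U ∧ ∀ x ∈ U, HasGradientAt j (j' x) x)
    (ub : H) (hub_mem : ub ∈ C) (hub_min : ∀ v ∈ C, j ub ≤ j v)
    (τ : ℕ → ℝ) (hτ_pos : ∀ n, 0 < τ n)
    (u g : ℕ → Ω → H)
    (hu_mem : ∀ n ω, u n ω ∈ C)
    (hupdate : ∀ n ω, u (n + 1) ω = proj (u n ω - τ n • g n ω))
    (hu_meas : ∀ n, StronglyMeasurable[ℱ n] (u n))
    (hg_unbiased : ∀ n, μ[g n | ℱ n] =ᵐ[μ] fun ω => j' (u n ω))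
    (hg_int : ∀ n, Integrable (g n) μ)
    (hg_sq_int : ∀ n, Integrable (fun ω => ‖g n ω‖ ^ 2) μ)
    (hu_sq_int : ∀ n u₀, Integrable (fun ω => ‖u n ω - u₀‖ ^ 2) μ)
    (M₁ M₂ : ℝ) (hM₁ : 0 < M₁) (hM₂ : 0 < M₂)
    (hgrowth : ∀ n, ∀ᵐ ω ∂μ,
      (μ[fun ω' => ‖g n ω'‖ ^ 2 | ℱ n]) ω ≤ M₁ + M₂ * ‖u n ω‖ ^ 2)
    (e : ℕ → ℝ) (he : ∀ n, e n = ∫ ω, ‖u n ω - ub‖ ^ 2 ∂μ)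
    (hjavg_int : ∀ i N : ℕ, Integrable (fun ω =>
      j (∑ n ∈ Finset.Icc i N, (τ n / ∑ l ∈ Finset.Icc i N, τ l) • u n ω)) μ) :
    ∀ i N : ℕ, 1 ≤ i → i ≤ N →
      (∫ ω, j (∑ n ∈ Finset.Icc i N, (τ n / ∑ l ∈ Finset.Icc i N, τ l) • u n ω) ∂μ) - j ub ≤
        (e i + ∑ n ∈ Finset.Icc i N, τ n ^ 2 * (2 * M₂ * e n + M₁ + 2 * M₂ * ‖ub‖ ^ 2)) /
          (2 * ∑ n ∈ Finset.Icc i N, τ n) :=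
  psg_averaged_iterates_estimate_general ℱ C hC_convex proj hproj j j' hj_convex hj_diff ub hub_mem
    τ hτ_pos u g hu_mem hupdate hu_meas hg_unbiased hg_int hg_sq_int hu_sq_int M₁ M₂ hM₂ hgrowth e
    he hjavg_int
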